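/- arXiv:1604.04936 — 3 statements merged into one kernel-verified Lean document; each statement's English description precedes it below -/
import Mathlib

section
/- Let β ∈ [0,1), λ = 1−β, let n satisfy Assumption 1 with γ* = δ*/λ, let θ > 0, and let s be real with |s| < 1 such that ξ = (β−s)/(1−s) satisfies |ξ| < 1. In the large-population–small-mutation limit (mutation rate μ = θ/n_t held so that θ = μ n_t is constant), the generating function of the total number of mutants, ℬ_t(s) = exp(θ·(a_t/n_t)·(𝒴_t(s) − 1)), satisfies lim_{t→∞} ℬ_t(s)·exp(θ λ a_t/n_t) = exp(−θ·Σ_{k=1}^∞ ξ^k/(γ*+k)). -/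
/-!
With `q = ξ e^{-λu}` one has `Z_u(s) - 1 + λ = -λq/(1 - q) =: -K(u)`, so after the substitution
`u = t - τ` the exponent of `ℬ_t(s) e^{θλa_t/n_t}` is `-θ ∫_0^∞ (n_{t-u}/n_t) K(u) du`.
Assumption 1 together with `log n_t / t → δ*` forces `n_{t-u}/n_t → e^{-δ* u}`; the ratio is at
most `1` and `K` decays like `e^{-λu}`, so dominated convergence gives the limit
`-θ ∫_0^∞ e^{-δ* u} K(u) du`, and expanding `K` as a geometric series and integrating term by term
yields `-θ Σ_{k≥1} ξ^k/(γ*+k)`.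
-/

open Filter Real intervalIntegral

/-- Assumption 1 on the wild-type growth function `n`. -/
def Assumption1 (n : ℝ → ℝ) : Prop :=
  (∀ τ : ℝ, τ < 0 → n τ = 0) ∧
  ContinuousOn n (Set.Ioi 0) ∧
  Filter.Tendsto n (nhdsWithin 0 (Set.Ioi 0)) (nhds (n 0)) ∧
  (∀ τ : ℝ, 0 < τ → 0 < n τ) ∧
  MonotoneOn n (Set.Ioi 0) ∧
  (∀ x : ℝ, 0 ≤ x → ∃ L : ℝ, 0 < L ∧
    Filter.Tendsto (fun t : ℝ => n (t - x) / n t) Filter.atTop (nhds L))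

open Topology MeasureTheory Set

theorem eq_mul_of_tendsto_div_of_tendsto_sub_shift {g : ℝ → ℝ} {δ c x : ℝ} (hx : 0 ≤ x)
    (hg : Tendsto (fun t => g t / t) atTop (𝓝 δ))
    (hc : Tendsto (fun t => g t - g (t - x)) atTop (𝓝 c)) : c = δ * x := by
  rcases hx.eq_or_lt with rfl | hx
  · simpa using tendsto_nhds_unique hc (by simp)
  have hmx : Tendsto (fun m : ℕ => (m : ℝ) * x) atTop atTop :=
    tendsto_natCast_atTop_atTop.atTop_mul_const hx
  have hincr : Tendsto (fun i : ℕ => g ((i + 1 : ℕ) * x) - g (i * x)) atTop (𝓝 c) := by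
    have hshift : Tendsto (fun i : ℕ => ((i + 1 : ℕ) : ℝ) * x) atTop atTop :=
      hmx.comp (tendsto_add_atTop_nat 1)
    exact (hc.comp hshift).congr fun i => by simp [add_mul]
  -- Cesàro along `m x`: `(g (m x) - g 0) / m` is the mean of the first `m` increments
  have hmean : Tendsto (fun m : ℕ => (m : ℝ)⁻¹ * (g (m * x) - g 0)) atTop (𝓝 c) := by
    refine hincr.cesaro.congr fun m => ?_
    rw [Finset.sum_range_sub (fun i : ℕ => g (i * x)), Nat.cast_zero, zero_mul]
  have hdiv : Tendsto (fun m : ℕ => (m : ℝ)⁻¹ * (g (m * x) - g 0)) atTop (𝓝 (δ * x)) := by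
    have h0 : Tendsto (fun m : ℕ => g 0 / m) atTop (𝓝 0) :=
      tendsto_const_nhds.div_atTop tendsto_natCast_atTop_atTop
    rw [← sub_zero (δ * x)]
    refine (((hg.comp hmx).mul_const x).sub h0).congr' ?_
    filter_upwards [eventually_ne_atTop 0] with m hm
    simp only [Function.comp_apply]
    field_simp
  exact tendsto_nhds_unique hmean hdiv

namespace Assumption1

variable {n : ℝ → ℝ}

theorem nonneg (hn : Assumption1 n) (τ : ℝ) : 0 ≤ n τ := by
  obtain ⟨hneg, -, hright, hpos, -, -⟩ := hn
  rcases lt_trichotomy τ 0 with hτ | rfl | hτ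
  · exact (hneg τ hτ).ge
  · exact ge_of_tendsto hright (eventually_nhdsWithin_of_forall fun σ hσ => (hpos σ hσ).le)
  · exact (hpos τ hτ).le

theorem monotone (hn : Assumption1 n) : Monotone n := by
  have hnonneg := hn.nonneg
  obtain ⟨hneg, -, hright, -, hmono, -⟩ := hn
  intro x y hxy
  rcases lt_trichotomy x 0 with hx | rfl | hx
  · exact (hneg x hx).trans_le (hnonneg y)
  · rcases hxy.eq_or_lt with rfl | hy
    · rfl
    · refine le_of_tendsto hright ?_
      filter_upwards [Ioo_mem_nhdsGT hy] with σ hσ using hmono hσ.1 hy hσ.2.le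
  · exact hmono hx (hx.trans_le hxy) hxy

theorem intervalIntegral_pos (hn : Assumption1 n) {t : ℝ} (ht : 0 < t) : 0 < ∫ τ in (0:ℝ)..t, n τ :=
  intervalIntegral_pos_of_pos_on hn.monotone.intervalIntegrable (fun τ hτ => hn.2.2.2.1 τ hτ.1) ht

variable {δ : ℝ}

theorem tendsto_div_of_tendsto_log_div (hn : Assumption1 n)
    (hδ : Tendsto (fun t => log (n t) / t) atTop (𝓝 δ)) {x : ℝ} (hx : 0 ≤ x) :
    Tendsto (fun t => n (t - x) / n t) atTop (𝓝 (exp (-δ * x))) := by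
  obtain ⟨L, hL, hlim⟩ := hn.2.2.2.2.2 x hx
  have hlog : Tendsto (fun t => log (n t) - log (n (t - x))) atTop (𝓝 (-log L)) := by
    refine ((continuousAt_log hL.ne').tendsto.comp hlim).neg.congr' ?_
    filter_upwards [eventually_gt_atTop x] with t ht
    have hpos := hn.2.2.2.1
    rw [Function.comp_apply, log_div (hpos _ (sub_pos.2 ht)).ne' (hpos t (hx.trans_lt ht)).ne']
    ring
  have hL : L = exp (-δ * x) := by
    rw [← exp_log hL, neg_mul, ← eq_mul_of_tendsto_div_of_tendsto_sub_shift hx hδ hlog, neg_neg]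
  rwa [← hL]

theorem nonneg_of_tendsto_log_div (hn : Assumption1 n)
    (hδ : Tendsto (fun t => log (n t) / t) atTop (𝓝 δ)) : 0 ≤ δ := by
  have hle : exp (-δ * 1) ≤ 1 :=
    le_of_tendsto (hn.tendsto_div_of_tendsto_log_div hδ zero_le_one) <|
      Eventually.of_forall fun t => div_le_one_of_le₀ (hn.monotone (by linarith)) (hn.nonneg t)
  simpa using hle

theorem tendsto_setIntegral_div_mul (hn : Assumption1 n)
    (hδ : Tendsto (fun t => log (n t) / t) atTop (𝓝 δ)) {f : ℝ → ℝ} (hf : IntegrableOn f (Ioi 0)) :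
    Tendsto (fun t => ∫ u in Ioi 0, n (t - u) / n t * f u) atTop
      (𝓝 (∫ u in Ioi 0, exp (-δ * u) * f u)) := by
  refine tendsto_integral_filter_of_dominated_convergence (fun u => ‖f u‖)
    (Eventually.of_forall fun t => ?_) (Eventually.of_forall fun t => ?_) hf.norm ?_
  · exact (((hn.monotone.measurable.comp (measurable_const.sub measurable_id)).div_const _
      ).aestronglyMeasurable).mul hf.aestronglyMeasurable
  · refine ae_restrict_of_forall_mem measurableSet_Ioi fun u hu => ?_
    rw [norm_mul, Real.norm_of_nonneg (div_nonneg (hn.nonneg _) (hn.nonneg t))]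
    exact mul_le_of_le_one_left (norm_nonneg _)
      (div_le_one_of_le₀ (hn.monotone (by linarith [mem_Ioi.1 hu])) (hn.nonneg t))
  · exact ae_restrict_of_forall_mem measurableSet_Ioi fun u hu =>
      (hn.tendsto_div_of_tendsto_log_div hδ (le_of_lt hu)).mul_const _

end Assumption1

/-- `1 - λ - Z_u(s)` in the paper's notation. -/
noncomputable def cloneKernel (lam ξ u : ℝ) : ℝ :=
  lam * (ξ * exp (-lam * u)) / (1 - ξ * exp (-lam * u))

section cloneKernel

variable {lam ξ u : ℝ}

theorem abs_mul_exp_le (hlam : 0 ≤ lam) (hu : 0 ≤ u) : |ξ * exp (-lam * u)| ≤ |ξ| := by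
  rw [abs_mul, abs_exp]
  exact mul_le_of_le_one_right (abs_nonneg ξ) (exp_le_one_iff.2 (by nlinarith))

theorem one_sub_abs_le_one_sub_mul_exp (hlam : 0 ≤ lam) (hu : 0 ≤ u) :
    1 - |ξ| ≤ 1 - ξ * exp (-lam * u) := by
  linarith [le_abs_self (ξ * exp (-lam * u)), abs_mul_exp_le (ξ := ξ) hlam hu]

theorem one_sub_div_eq_sub_cloneKernel (hlam : 0 ≤ lam) (hξ : |ξ| < 1) (hu : 0 ≤ u) :
    1 - lam / (1 - ξ * exp (-lam * u)) = 1 - lam - cloneKernel lam ξ u := by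
  have hden : 1 - ξ * exp (-lam * u) ≠ 0 := by
    linarith [one_sub_abs_le_one_sub_mul_exp (ξ := ξ) hlam hu]
  rw [cloneKernel]
  generalize ξ * exp (-lam * u) = q at hden ⊢
  field_simp
  ring

theorem abs_cloneKernel_le (hlam : 0 ≤ lam) (hξ : |ξ| < 1) (hu : 0 ≤ u) :
    |cloneKernel lam ξ u| ≤ lam * |ξ| / (1 - |ξ|) * exp (-lam * u) := by
  have hden := one_sub_abs_le_one_sub_mul_exp (ξ := ξ) hlam hu
  rw [cloneKernel, abs_div, abs_of_pos (a := 1 - ξ * exp (-lam * u)) (by linarith), abs_mul,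
    abs_mul, abs_exp, abs_of_nonneg hlam, div_mul_eq_mul_div, ← mul_assoc]
  exact div_le_div_of_nonneg_left (by positivity) (by linarith) hden

theorem continuousOn_cloneKernel (hlam : 0 ≤ lam) (hξ : |ξ| < 1) :
    ContinuousOn (cloneKernel lam ξ) (Ici 0) := by
  refine ContinuousOn.div (by fun_prop) (by fun_prop) fun u hu => ?_
  linarith [one_sub_abs_le_one_sub_mul_exp (ξ := ξ) hlam (mem_Ici.1 hu)]

theorem integrableOn_cloneKernel (hlam : 0 < lam) (hξ : |ξ| < 1) :
    IntegrableOn (cloneKernel lam ξ) (Ioi 0) := by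
  refine ((exp_neg_integrableOn_Ioi 0 hlam).const_mul (lam * |ξ| / (1 - |ξ|))).mono'
    ((continuousOn_cloneKernel hlam.le hξ).mono Ioi_subset_Ici_self |>.aestronglyMeasurable
      measurableSet_Ioi) ?_
  exact ae_restrict_of_forall_mem measurableSet_Ioi fun u hu =>
    abs_cloneKernel_le hlam.le hξ (le_of_lt hu)

theorem hasSum_exp_mul_cloneKernel (hlam : 0 ≤ lam) (hξ : |ξ| < 1) (hu : 0 ≤ u) (δ : ℝ) :
    HasSum (fun k : ℕ => lam * ξ ^ (k + 1) * exp (-(δ + (k + 1) * lam) * u))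
      (exp (-δ * u) * cloneKernel lam ξ u) := by
  have hq : |ξ * exp (-lam * u)| < 1 := (abs_mul_exp_le hlam hu).trans_lt hξ
  have hterm : ∀ k : ℕ, lam * ξ ^ (k + 1) * exp (-(δ + (k + 1) * lam) * u)
      = lam * exp (-δ * u) * (ξ * exp (-lam * u)) * (ξ * exp (-lam * u)) ^ k := fun k => by
    rw [show -(δ + (k + 1) * lam) * u = -δ * u + (k + 1 : ℕ) * (-lam * u) by push_cast; ring,
      exp_add, exp_nat_mul]
    ring
  have hvalue : exp (-δ * u) * cloneKernel lam ξ u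
      = lam * exp (-δ * u) * (ξ * exp (-lam * u)) * (1 - ξ * exp (-lam * u))⁻¹ := by
    rw [cloneKernel, div_eq_mul_inv]
    ring
  rw [hvalue, funext hterm]
  exact (hasSum_geometric_of_abs_lt_one hq).mul_left _

theorem integral_exp_mul_cloneKernel (hlam : 0 < lam) (hξ : |ξ| < 1) {δ : ℝ} (hδ : 0 ≤ δ) :
    ∫ u in Ioi 0, exp (-δ * u) * cloneKernel lam ξ u
      = ∑' k : ℕ, ξ ^ (k + 1) / (δ / lam + (k + 1)) := by
  have hrate : ∀ k : ℕ, 0 < δ + (k + 1) * lam := fun k => by positivity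
  have hintegral : ∀ k : ℕ,
      ∫ u in Ioi 0, exp (-(δ + (k + 1) * lam) * u) = 1 / (δ + (k + 1) * lam) := fun k => by
    rw [integral_exp_mul_Ioi (by linarith [hrate k]), mul_zero, exp_zero, neg_div_neg_eq]
  have hterm : ∀ k : ℕ, ∫ u in Ioi 0, lam * ξ ^ (k + 1) * exp (-(δ + (k + 1) * lam) * u)
      = ξ ^ (k + 1) / (δ / lam + (k + 1)) := fun k => by
    rw [MeasureTheory.integral_const_mul, hintegral]
    field_simp
  have hnorm : ∀ k : ℕ, ∫ u in Ioi 0, ‖lam * ξ ^ (k + 1) * exp (-(δ + (k + 1) * lam) * u)‖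
      ≤ |ξ| ^ (k + 1) := fun k => by
    simp only [norm_mul, norm_pow, Real.norm_eq_abs, abs_of_pos hlam, abs_exp]
    rw [MeasureTheory.integral_const_mul, hintegral, mul_comm lam, mul_assoc, mul_one_div]
    refine mul_le_of_le_one_right (by positivity) ((div_le_one (hrate k)).2 ?_)
    nlinarith [hlam, (k.cast_nonneg : (0 : ℝ) ≤ k)]
  have hsum := hasSum_integral_of_summable_integral_norm
    (fun k => (exp_neg_integrableOn_Ioi 0 (hrate k)).const_mul (lam * ξ ^ (k + 1)))
    (Summable.of_nonneg_of_le (fun k => integral_nonneg fun u => norm_nonneg _) hnorm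
      ((summable_nat_add_iff 1).2 (summable_geometric_of_lt_one (abs_nonneg ξ) hξ)))
  refine (setIntegral_congr_fun measurableSet_Ioi fun u hu => ?_).trans
    (hsum.tsum_eq.symm.trans (tsum_congr hterm))
  exact (hasSum_exp_mul_cloneKernel hlam.le hξ (le_of_lt hu) δ).tsum_eq.symm

end cloneKernel

theorem setIntegral_Ioi_comp_sub_mul_eq {n f : ℝ → ℝ} (hn : ∀ τ < 0, n τ = 0) {t : ℝ}
    (ht : 0 ≤ t) : ∫ u in Ioi 0, n (t - u) * f u = ∫ τ in (0:ℝ)..t, n τ * f (t - τ) := by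
  have hvanish : ∀ u ∈ Ioi 0 \ Ioc 0 t, n (t - u) * f u = 0 := fun u hu => by
    have htu : t < u := not_le.1 fun h => hu.2 ⟨hu.1, h⟩
    rw [hn _ (by linarith), zero_mul]
  rw [setIntegral_eq_of_subset_of_forall_sdiff_eq_zero measurableSet_Ioi Ioc_subset_Ioi_self
    hvanish, ← intervalIntegral.integral_of_le ht]
  simpa using intervalIntegral.integral_comp_sub_left (a := 0) (b := t) (fun τ => n τ * f (t - τ)) t

theorem intervalIntegral_mul_one_sub_div_eq {n : ℝ → ℝ} {lam ξ t : ℝ} (hn : ∀ τ < 0, n τ = 0)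
    (hint : IntervalIntegrable n volume 0 t) (hlam : 0 ≤ lam) (hξ : |ξ| < 1) (ht : 0 ≤ t) :
    ∫ τ in (0:ℝ)..t, n τ * (1 - lam / (1 - ξ * exp (-lam * (t - τ))))
      = (1 - lam) * (∫ τ in (0:ℝ)..t, n τ) - ∫ u in Ioi 0, n (t - u) * cloneKernel lam ξ u := by
  have hcont : ContinuousOn (fun τ => cloneKernel lam ξ (t - τ)) (uIcc 0 t) :=
    (continuousOn_cloneKernel hlam hξ).comp (by fun_prop) fun τ hτ => by
      rw [uIcc_of_le ht] at hτ
      exact sub_nonneg.2 hτ.2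
  rw [setIntegral_Ioi_comp_sub_mul_eq hn ht, ← intervalIntegral.integral_const_mul,
    ← intervalIntegral.integral_sub (hint.const_mul _) (hint.mul_continuousOn hcont)]
  refine intervalIntegral.integral_congr fun τ hτ => ?_
  rw [uIcc_of_le ht] at hτ
  rw [one_sub_div_eq_sub_cloneKernel hlam hξ (sub_nonneg.2 hτ.2)]
  ring

theorem total_mutants_large_pop_small_mutation_limit_general
    (β : ℝ) (hβ : β ∈ Set.Ico (0 : ℝ) 1) (lam : ℝ) (hlam : lam = 1 - β)
    (n : ℝ → ℝ) (hn : Assumption1 n) (δ : ℝ)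
    (hδlim : Filter.Tendsto (fun t : ℝ => Real.log (n t) / t) Filter.atTop (nhds δ))
    (γ : ℝ) (hγ : γ = δ / lam) (θ : ℝ)
    (ξ : ℝ) (hξ : |ξ| < 1)
    (a Y B : ℝ → ℝ)
    (ha : ∀ t : ℝ, a t = ∫ τ in (0:ℝ)..t, n τ)
    (hY : ∀ t : ℝ,
      Y t = (1 / a t) *
        ∫ τ in (0:ℝ)..t, n τ * (1 - lam / (1 - ξ * Real.exp (-lam * (t - τ)))))
    (hB : ∀ t : ℝ, B t = Real.exp (θ * (a t / n t) * (Y t - 1))) :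
    Filter.Tendsto (fun t : ℝ => B t * Real.exp (θ * lam * a t / n t))
      Filter.atTop
      (nhds (Real.exp (-θ * ∑' k : ℕ, ξ ^ (k + 1) / (γ + (k + 1))))) := by
  have hlam_pos : 0 < lam := by rw [hlam]; linarith [hβ.2]
  have hlimit := (hn.tendsto_setIntegral_div_mul hδlim
    (integrableOn_cloneKernel hlam_pos hξ)).const_mul (-θ)
  rw [integral_exp_mul_cloneKernel hlam_pos hξ (hn.nonneg_of_tendsto_log_div hδlim), ← hγ] at hlimit
  refine ((continuous_exp.tendsto _).comp hlimit).congr' ?_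
  filter_upwards [eventually_gt_atTop 0] with t ht
  have hnt : n t ≠ 0 := (hn.2.2.2.1 t ht).ne'
  have hat : a t ≠ 0 := (ha t ▸ hn.intervalIntegral_pos ht).ne'
  have hconv := intervalIntegral_mul_one_sub_div_eq hn.1 hn.monotone.intervalIntegrable
    hlam_pos.le hξ ht.le
  rw [← ha] at hconv
  rw [Function.comp_apply, hB, ← exp_add, hY, hconv]
  congr 1
  simp_rw [div_mul_eq_mul_div, MeasureTheory.integral_div]
  field_simp
  ring

/-- Large-population–small-mutation limit of the generating function of the total number
of mutants: with `ℬ_t(s) = exp(θ (a_t/n_t)(𝒴_t(s) − 1))` and `θ = μ n_t` constant,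
`lim_{t→∞} ℬ_t(s) exp(θ λ a_t/n_t) = exp(−θ Σ_{k≥1} ξ^k/(γ*+k))`, where
`𝒴_t(s) = (1/a_t)∫_0^t n_τ Z_{t−τ}(s) dτ`, `Z_u(s) = 1 − λ/(1 − ξ e^{−λu})`,
`ξ = (β−s)/(1−s)`, `λ = 1−β`, `γ* = δ*/λ`. -/
theorem total_mutants_large_pop_small_mutation_limit
    (β : ℝ) (hβ : β ∈ Set.Ico (0 : ℝ) 1) (lam : ℝ) (hlam : lam = 1 - β)
    (n : ℝ → ℝ) (hn : Assumption1 n) (δ : ℝ)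
    (hδlim : Filter.Tendsto (fun t : ℝ => Real.log (n t) / t) Filter.atTop (nhds δ))
    (γ : ℝ) (hγ : γ = δ / lam) (θ : ℝ) (hθ : 0 < θ)
    (s ξ : ℝ) (hs : |s| < 1) (hξdef : ξ = (β - s) / (1 - s)) (hξ : |ξ| < 1)
    (a Y B : ℝ → ℝ)
    (ha : ∀ t : ℝ, a t = ∫ τ in (0:ℝ)..t, n τ)
    (hY : ∀ t : ℝ,
      Y t = (1 / a t) *
        ∫ τ in (0:ℝ)..t, n τ * (1 - lam / (1 - ξ * Real.exp (-lam * (t - τ)))))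
    (hB : ∀ t : ℝ, B t = Real.exp (θ * (a t / n t) * (Y t - 1))) :
    Filter.Tendsto (fun t : ℝ => B t * Real.exp (θ * lam * a t / n t))
      Filter.atTop
      (nhds (Real.exp (-θ * ∑' k : ℕ, ξ ^ (k + 1) / (γ + (k + 1))))) :=
  total_mutants_large_pop_small_mutation_limit_general β hβ lam hlam n hn δ hδlim γ hγ θ ξ hξ a Y B
    ha hY hB
end

section
/- Let β ∈ [0,1), λ = 1−β, let n satisfy Assumption 1, and fix real numbers 0 < ε ≤ x. For t > 0 set N_t(y) = ∫_0^t n(t−τ)·(1−β S_τ^{−1})·S_τ^{−⌊y e^{λt}⌋} dτ, and set m(y) = ∫_y^∞ n(λ^{−1} log(s/y))·e^{−λs}·s^{−1} ds. Then lim_{t→∞} N_t(x)/N_t(ε) = m(x)/m(ε); i.e. conditioned on the rescaled clone size Y_t e^{−λt} exceeding ε, the rescaled clone size converges in distribution to the law with tail m(x)/m(ε) on [ε,∞), the normalized mean measure of the limiting Poisson point process of clone sizes. -/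
/-!
Substituting `u = t - τ` turns `N_t(y)` into `∫_0^t n(u) P(Z_{t-u} > ⌊y e^{λt}⌋) du`.
Since `log S_τ` lies between `λ e^{-λτ}` and `λ e^{-λτ} / (1 - e^{-λτ})`, for fixed `u` this tail
probability tends to `λ exp(-λ y e^{λu})`, and it is bounded by `e^λ exp(-λ y e^{λu})` uniformly
in `t`. The ratio condition on `n` forces at most exponential growth, so
`n(u) exp(-λ y e^{λu})` is integrable and dominated convergence gives
`N_t(y) → λ ∫_0^∞ n(u) exp(-λ y e^{λu}) du`; the substitution `s = y e^{λu}` identifies this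
positive limit with `m(y)`.
-/

open Filter Real intervalIntegral MeasureTheory

/-- `S u = (1 - β e^{-λu})/(1 - e^{-λu})` with `λ = 1 - β`. -/
noncomputable def birthDeathS (β u : ℝ) : ℝ :=
  (1 - β * Real.exp (-(1 - β) * u)) / (1 - Real.exp (-(1 - β) * u))

open Set Topology

lemma exists_le_mul_exp_of_tendsto_div {n : ℝ → ℝ} (hpos : ∀ u, 0 < u → 0 < n u)
    (hmono : MonotoneOn n (Ioi 0)) {L : ℝ} (hL : 0 < L)
    (hlim : Tendsto (fun t => n (t - 1) / n t) atTop (𝓝 L)) :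
    ∃ C p : ℝ, ∀ u, 0 < u → n u ≤ C * exp (p * u) := by
  obtain ⟨T, hT⟩ := ((eventually_ge_atTop 1).and
    (hlim.eventually (eventually_ge_nhds (half_lt_self hL)))).exists_forall_of_atTop
  have hT0 : 0 < T := one_pos.trans_le (hT T le_rfl).1
  set M := max (2 / L) 1
  have hM : 0 < M := one_pos.trans_le (le_max_right _ _)
  have hstep : ∀ t, T ≤ t → n t ≤ M * n (t - 1) := by
    intro t ht
    have hnt := hpos t (hT0.trans_le ht)
    have hratio : L / 2 * n t ≤ n (t - 1) := (le_div_iff₀ hnt).1 (hT t ht).2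
    have hprev : 0 < n (t - 1) := (by positivity : 0 < L / 2 * n t).trans_le hratio
    calc n t ≤ 2 / L * n (t - 1) := by rw [div_mul_eq_mul_div, le_div_iff₀ hL]; linarith
      _ ≤ M * n (t - 1) := by gcongr; exact le_max_left _ _
  have hiter : ∀ k : ℕ, n (T + k) ≤ M ^ k * n T := by
    intro k
    induction k with
    | zero => simp
    | succ k ih =>
      calc n (T + (k + 1 : ℕ)) ≤ M * n (T + (k + 1 : ℕ) - 1) := hstep _ (by simp; positivity)
        _ = M * n (T + k) := by push_cast; ring_nf
        _ ≤ M * (M ^ k * n T) := by gcongr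
        _ = M ^ (k + 1) * n T := by ring
  refine ⟨n T * M, log M, fun u hu => ?_⟩
  have hceil : u ≤ T + ⌈u⌉₊ := by linarith [Nat.le_ceil u]
  calc n u ≤ n (T + ⌈u⌉₊) := hmono hu (by simp only [mem_Ioi]; linarith) hceil
    _ ≤ M ^ ⌈u⌉₊ * n T := hiter _
    _ = n T * exp (log M * ⌈u⌉₊) := by rw [mul_comm, exp_mul, exp_log hM, rpow_natCast]
    _ ≤ n T * exp (log M * (u + 1)) := by
        gcongr
        · exact (hpos T hT0).le
        · exact log_nonneg (le_max_right _ _)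
        · linarith [Nat.ceil_lt_add_one hu.le]
    _ = n T * M * exp (log M * u) := by rw [mul_add, mul_one, exp_add, exp_log hM]; ring

lemma exp_mul_mul_exp_neg_exp_le (p : ℝ) {a lam : ℝ} (ha : 0 < a) (hlam : 0 < lam) :
    ∃ K, ∀ u, 0 ≤ u → exp (p * u) * exp (-(a * exp (lam * u))) ≤ K * exp (-u) := by
  set M := ⌈(p + 1) / lam⌉₊
  refine ⟨M.factorial / a ^ M, fun u hu => ?_⟩
  have hpow : (a * exp (lam * u)) ^ M / M.factorial ≤ exp (a * exp (lam * u)) :=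
    pow_div_factorial_le_exp _ (by positivity) M
  have hexp : (a * exp (lam * u)) ^ M = a ^ M * exp (M * lam * u) := by
    rw [mul_pow, ← exp_nat_mul]; ring_nf
  have hM : p + 1 ≤ M * lam := (div_le_iff₀ hlam).1 (Nat.le_ceil _)
  rw [hexp] at hpow
  rw [exp_neg]
  calc exp (p * u) * (exp (a * exp (lam * u)))⁻¹
      ≤ exp (p * u) * (a ^ M * exp (M * lam * u) / M.factorial)⁻¹ := by
        gcongr
    _ = M.factorial / a ^ M * exp (p * u - M * lam * u) := by
        rw [exp_sub]; field_simp
    _ ≤ M.factorial / a ^ M * exp (-u) := by gcongr; nlinarith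

lemma Assumption1.pos {n : ℝ → ℝ} (hn : Assumption1 n) {u : ℝ} (hu : 0 < u) : 0 < n u :=
  hn.2.2.2.1 u hu

lemma Assumption1.continuousOn {n : ℝ → ℝ} (hn : Assumption1 n) : ContinuousOn n (Ioi 0) :=
  hn.2.1

lemma Assumption1.exists_le_mul_exp {n : ℝ → ℝ} (hn : Assumption1 n) :
    ∃ C p : ℝ, ∀ u, 0 < u → n u ≤ C * exp (p * u) := by
  obtain ⟨-, -, -, hpos, hmono, hlim⟩ := hn
  obtain ⟨L, hL, hLlim⟩ := hlim 1 zero_le_one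
  exact exists_le_mul_exp_of_tendsto_div hpos hmono hL hLlim

lemma Assumption1.integrableOn_mul_exp_neg_exp {n : ℝ → ℝ} (hn : Assumption1 n) {a lam : ℝ}
    (ha : 0 < a) (hlam : 0 < lam) :
    IntegrableOn (fun u => n u * exp (-(a * exp (lam * u)))) (Ioi 0) := by
  obtain ⟨C, p, hC⟩ := hn.exists_le_mul_exp
  obtain ⟨K, hK⟩ := exp_mul_mul_exp_neg_exp_le p ha hlam
  refine Integrable.mono' ((exp_neg_integrableOn_Ioi 0 one_pos).const_mul (C * K))
    ((hn.continuousOn.mul (by fun_prop)).aestronglyMeasurable measurableSet_Ioi)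
    (ae_restrict_of_forall_mem measurableSet_Ioi fun u (hu : 0 < u) => ?_)
  have hnu := hn.pos hu
  have hC0 : 0 ≤ C := nonneg_of_mul_nonneg_left ((hnu.trans_le (hC u hu)).le) (exp_pos _)
  rw [norm_of_nonneg (by positivity)]
  calc n u * exp (-(a * exp (lam * u))) ≤ C * exp (p * u) * exp (-(a * exp (lam * u))) := by
        gcongr; exact hC u hu
    _ ≤ C * (K * exp (-u)) := by rw [mul_assoc]; exact mul_le_mul_of_nonneg_left (hK u hu.le) hC0
    _ = C * K * exp (-1 * u) := by ring_nf

lemma Assumption1.integral_mul_exp_neg_exp_pos {n : ℝ → ℝ} (hn : Assumption1 n) {a lam : ℝ}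
    (ha : 0 < a) (hlam : 0 < lam) :
    0 < ∫ u in Ioi 0, n u * exp (-(a * exp (lam * u))) := by
  have hpos : ∀ u ∈ Ioi (0 : ℝ), 0 < n u * exp (-(a * exp (lam * u))) :=
    fun u hu => mul_pos (hn.pos hu) (exp_pos _)
  rw [setIntegral_pos_iff_support_of_nonneg_ae
    (ae_restrict_of_forall_mem measurableSet_Ioi fun u hu => (hpos u hu).le)
    (hn.integrableOn_mul_exp_neg_exp ha hlam)]
  have hsupport : Function.support (fun u => n u * exp (-(a * exp (lam * u)))) ∩ Ioi 0 = Ioi 0 :=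
    inter_eq_right.2 fun u hu => (hpos u hu).ne'
  rw [hsupport, Real.volume_Ioi]
  exact ENNReal.zero_lt_top

lemma integral_Ioi_comp_log_div (f : ℝ → ℝ) {lam y : ℝ} (hlam : 0 < lam) (hy : 0 < y) :
    ∫ s in Ioi y, f (lam⁻¹ * log (s / y)) * exp (-lam * s) / s
      = lam * ∫ u in Ioi 0, f u * exp (-(lam * y * exp (lam * u))) := by
  set φ : ℝ → ℝ := fun u => y * exp (lam * u)
  have himage : φ '' Ioi 0 = Ioi y := by
    ext s
    constructor
    · rintro ⟨u, hu, rfl⟩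
      exact lt_mul_of_one_lt_right hy (one_lt_exp_iff.2 (mul_pos hlam hu))
    · intro (hs : y < s)
      refine ⟨lam⁻¹ * log (s / y), mul_pos (inv_pos.2 hlam) (log_pos ((one_lt_div hy).2 hs)), ?_⟩
      show y * exp (lam * (lam⁻¹ * log (s / y))) = s
      rw [mul_inv_cancel_left₀ hlam.ne', exp_log (div_pos (hy.trans hs) hy)]
      field_simp
  have hderiv : ∀ u ∈ Ioi (0 : ℝ), HasDerivWithinAt φ (lam * φ u) (Ioi 0) u := fun u _ =>
    ((((hasDerivAt_id u).const_mul lam).exp.const_mul y).congr_deriv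
      (by simp only [φ, id]; ring)).hasDerivWithinAt
  have hinj : InjOn φ (Ioi 0) := fun u _ v _ h => by simpa [φ, hy.ne', hlam.ne'] using h
  rw [← himage, integral_image_eq_integral_abs_deriv_smul measurableSet_Ioi hderiv hinj,
    ← MeasureTheory.integral_const_mul]
  refine setIntegral_congr_fun measurableSet_Ioi fun u _ => ?_
  have hφ : 0 < φ u := by positivity
  simp only [φ, smul_eq_mul, abs_of_pos (mul_pos hlam hφ)]
  rw [mul_div_cancel_left₀ _ hy.ne', log_exp, inv_mul_cancel_left₀ hlam.ne']
  field_simp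

lemma tendsto_nat_floor_mul_exp_mul_exp_neg {lam y : ℝ} (hlam : 0 < lam) (hy : 0 ≤ y) :
    Tendsto (fun t => (⌊y * exp (lam * t)⌋₊ : ℝ) * exp (-lam * t)) atTop (𝓝 y) := by
  refine ((tendsto_nat_floor_mul_div_atTop hy).comp
    (tendsto_exp_atTop.comp (tendsto_id.const_mul_atTop hlam))).congr fun t => ?_
  simp [div_eq_mul_inv, ← exp_neg]

section BirthDeath

variable {β : ℝ}

lemma exp_neg_mul_mem_Ioo (hβ1 : β < 1) {τ : ℝ} (hτ : 0 < τ) :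
    exp (-(1 - β) * τ) ∈ Ioo 0 1 :=
  ⟨exp_pos _, exp_lt_one_iff.2 (mul_neg_of_neg_of_pos (by linarith) hτ)⟩

lemma birthDeathS_sub_one (hβ1 : β < 1) {τ : ℝ} (hτ : 0 < τ) :
    birthDeathS β τ - 1 = (1 - β) * exp (-(1 - β) * τ) / (1 - exp (-(1 - β) * τ)) := by
  have hr := (exp_neg_mul_mem_Ioo hβ1 hτ).2
  rw [birthDeathS, div_sub_one (by linarith)]
  ring_nf

lemma one_lt_birthDeathS (hβ1 : β < 1) {τ : ℝ} (hτ : 0 < τ) : 1 < birthDeathS β τ := by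
  obtain ⟨hr0, hr1⟩ := exp_neg_mul_mem_Ioo hβ1 hτ
  rw [← sub_pos, birthDeathS_sub_one hβ1 hτ]
  exact div_pos (mul_pos (by linarith) hr0) (by linarith)

lemma one_sub_inv_birthDeathS (hβ1 : β < 1) {τ : ℝ} (hτ : 0 < τ) :
    1 - (birthDeathS β τ)⁻¹
      = (1 - β) * exp (-(1 - β) * τ) / (1 - β * exp (-(1 - β) * τ)) := by
  obtain ⟨hr0, hr1⟩ := exp_neg_mul_mem_Ioo hβ1 hτ
  have : 0 < 1 - β * exp (-(1 - β) * τ) := by nlinarith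
  rw [birthDeathS, inv_div, one_sub_div this.ne']
  ring_nf

lemma log_birthDeathS_le (hβ1 : β < 1) {τ : ℝ} (hτ : 0 < τ) :
    log (birthDeathS β τ) ≤ (1 - β) * exp (-(1 - β) * τ) / (1 - exp (-(1 - β) * τ)) :=
  (log_le_sub_one_of_pos (one_pos.trans (one_lt_birthDeathS hβ1 hτ))).trans_eq
    (birthDeathS_sub_one hβ1 hτ)

lemma le_log_birthDeathS (hβ0 : 0 ≤ β) (hβ1 : β < 1) {τ : ℝ} (hτ : 0 < τ) :
    (1 - β) * exp (-(1 - β) * τ) ≤ log (birthDeathS β τ) := by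
  obtain ⟨hr0, hr1⟩ := exp_neg_mul_mem_Ioo hβ1 hτ
  calc (1 - β) * exp (-(1 - β) * τ)
      ≤ (1 - β) * exp (-(1 - β) * τ) / (1 - β * exp (-(1 - β) * τ)) :=
        le_div_self (by nlinarith) (by nlinarith) (by nlinarith)
    _ = 1 - (birthDeathS β τ)⁻¹ := (one_sub_inv_birthDeathS hβ1 hτ).symm
    _ ≤ log (birthDeathS β τ) :=
        one_sub_inv_le_log_of_pos (one_pos.trans (one_lt_birthDeathS hβ1 hτ))

lemma tendsto_exp_neg_mul_atTop (hβ1 : β < 1) :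
    Tendsto (fun τ => exp (-(1 - β) * τ)) atTop (𝓝 0) :=
  tendsto_exp_atBot.comp (tendsto_id.const_mul_atTop_of_neg (by linarith))

lemma tendsto_birthDeathS_atTop (hβ1 : β < 1) : Tendsto (birthDeathS β) atTop (𝓝 1) := by
  have hr := tendsto_exp_neg_mul_atTop hβ1
  have := ((tendsto_const_nhds (x := (1 : ℝ))).sub (hr.const_mul β)).div
    ((tendsto_const_nhds (x := (1 : ℝ))).sub hr) (by norm_num)
  simp only [mul_zero, sub_zero, div_one] at this
  exact this

/-- `P(Z_τ > k)`. -/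
noncomputable def birthDeathTail (β τ : ℝ) (k : ℕ) : ℝ :=
  (1 - β * (birthDeathS β τ)⁻¹) * (birthDeathS β τ)⁻¹ ^ k

lemma birthDeathTail_eq (hβ1 : β < 1) {τ : ℝ} (hτ : 0 < τ) (k : ℕ) :
    birthDeathTail β τ k
      = (1 - β * (birthDeathS β τ)⁻¹) * exp (-(k * log (birthDeathS β τ))) := by
  rw [birthDeathTail, ← mul_neg, ← log_inv, exp_nat_mul,
    exp_log (inv_pos.2 (one_pos.trans (one_lt_birthDeathS hβ1 hτ)))]

lemma birthDeathTail_nonneg (hβ1 : β < 1) {τ : ℝ} (hτ : 0 < τ) (k : ℕ) :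
    0 ≤ birthDeathTail β τ k := by
  have hS := one_lt_birthDeathS hβ1 hτ
  have hSinv : (birthDeathS β τ)⁻¹ < 1 := inv_lt_one_of_one_lt₀ hS
  have : 0 < (birthDeathS β τ)⁻¹ := inv_pos.2 (one_pos.trans hS)
  exact mul_nonneg (by nlinarith) (by positivity)

lemma birthDeathTail_le (hβ0 : 0 ≤ β) (hβ1 : β < 1) {τ : ℝ} (hτ : 0 < τ) (k : ℕ) :
    birthDeathTail β τ k ≤ exp (-((1 - β) * (k * exp (-(1 - β) * τ)))) := by
  have hS := one_lt_birthDeathS hβ1 hτ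
  have : 0 < (birthDeathS β τ)⁻¹ := inv_pos.2 (one_pos.trans hS)
  rw [birthDeathTail_eq hβ1 hτ]
  calc (1 - β * (birthDeathS β τ)⁻¹) * exp (-(k * log (birthDeathS β τ)))
      ≤ 1 * exp (-(k * log (birthDeathS β τ))) := by gcongr; nlinarith
    _ ≤ exp (-((1 - β) * (k * exp (-(1 - β) * τ)))) := by
        rw [one_mul, mul_left_comm]
        gcongr
        exact le_log_birthDeathS hβ0 hβ1 hτ

lemma tendsto_birthDeathTail {ι : Type*} {l : Filter ι} {τ : ι → ℝ} {k : ι → ℕ} {c : ℝ}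
    (hβ0 : 0 ≤ β) (hβ1 : β < 1) (hτ : Tendsto τ l atTop)
    (hk : Tendsto (fun i => k i * exp (-(1 - β) * τ i)) l (𝓝 c)) :
    Tendsto (fun i => birthDeathTail β (τ i) (k i)) l (𝓝 ((1 - β) * exp (-((1 - β) * c)))) := by
  have hr := (tendsto_exp_neg_mul_atTop hβ1).comp hτ
  have hpos : ∀ᶠ i in l, 0 < τ i := hτ.eventually_gt_atTop 0
  have hlog : Tendsto (fun i => k i * log (birthDeathS β (τ i))) l (𝓝 ((1 - β) * c)) := by
    have hup := (hk.const_mul (1 - β)).div ((tendsto_const_nhds (x := (1 : ℝ))).sub hr)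
      (by norm_num)
    rw [sub_zero, div_one] at hup
    refine tendsto_of_tendsto_of_tendsto_of_le_of_le' (hk.const_mul (1 - β)) hup ?_ ?_
    · filter_upwards [hpos] with i hi
      rw [mul_left_comm]
      exact mul_le_mul_of_nonneg_left (le_log_birthDeathS hβ0 hβ1 hi) (Nat.cast_nonneg _)
    · filter_upwards [hpos] with i hi
      calc k i * log (birthDeathS β (τ i))
          ≤ k i * ((1 - β) * exp (-(1 - β) * τ i) / (1 - exp (-(1 - β) * τ i))) :=
            mul_le_mul_of_nonneg_left (log_birthDeathS_le hβ1 hi) (Nat.cast_nonneg _)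
        _ = _ := by simp only [Function.comp_apply, Pi.div_apply]; ring
  have hfactor : Tendsto (fun i => 1 - β * (birthDeathS β (τ i))⁻¹) l (𝓝 (1 - β)) := by
    simpa using tendsto_const_nhds.sub
      ((((tendsto_birthDeathS_atTop hβ1).comp hτ).inv₀ one_ne_zero).const_mul β)
  refine (hfactor.mul hlog.neg.rexp).congr' ?_
  filter_upwards [hpos] with i hi
  rw [birthDeathTail_eq hβ1 hi]

lemma tendsto_birthDeathTail_floor (hβ0 : 0 ≤ β) (hβ1 : β < 1) {y : ℝ} (hy : 0 ≤ y) (u : ℝ) :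
    Tendsto (fun t => birthDeathTail β (t - u) ⌊y * exp ((1 - β) * t)⌋₊) atTop
      (𝓝 ((1 - β) * exp (-((1 - β) * y * exp ((1 - β) * u))))) := by
  have hk : Tendsto (fun t => ⌊y * exp ((1 - β) * t)⌋₊ * exp (-(1 - β) * (t - u))) atTop
      (𝓝 (y * exp ((1 - β) * u))) := by
    refine ((tendsto_nat_floor_mul_exp_mul_exp_neg (sub_pos.2 hβ1) hy).mul_const
      (exp ((1 - β) * u))).congr fun t => ?_
    rw [mul_assoc, ← exp_add]
    ring_nf
  simpa only [mul_assoc] using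
    tendsto_birthDeathTail hβ0 hβ1 ((tendsto_atTop_add_const_right _ (-u) tendsto_id).congr
      fun t => (sub_eq_add_neg t u).symm) hk

lemma birthDeathTail_floor_le (hβ0 : 0 ≤ β) (hβ1 : β < 1) {y t u : ℝ} (hut : u < t) :
    birthDeathTail β (t - u) ⌊y * exp ((1 - β) * t)⌋₊
      ≤ exp (1 - β) * exp (-((1 - β) * y * exp ((1 - β) * u))) := by
  refine (birthDeathTail_le hβ0 hβ1 (sub_pos.2 hut) _).trans ?_
  rw [← exp_add, exp_le_exp]
  obtain ⟨hr0, hr1⟩ := exp_neg_mul_mem_Ioo hβ1 (sub_pos.2 hut)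
  have hfloor := Nat.sub_one_lt_floor (y * exp ((1 - β) * t))
  have hrescale : y * exp ((1 - β) * t) * exp (-(1 - β) * (t - u)) = y * exp ((1 - β) * u) := by
    rw [mul_assoc, ← exp_add]; ring_nf
  have hlam : 0 < 1 - β := by linarith
  nlinarith [mul_lt_mul_of_pos_right hfloor hr0]

end BirthDeath

lemma intervalIntegral_comp_sub_eq_setIntegral_indicator (f : ℝ → ℝ) {t : ℝ} (ht : 0 ≤ t) :
    ∫ τ in (0 : ℝ)..t, f (t - τ) = ∫ u in Ioi 0, (Ioo 0 t).indicator f u := by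
  rw [intervalIntegral.integral_comp_sub_left, sub_self, sub_zero,
    intervalIntegral.integral_of_le ht, integral_Ioc_eq_integral_Ioo,
    setIntegral_indicator measurableSet_Ioo, inter_eq_right.2 Ioo_subset_Ioi_self]

lemma Assumption1.tendsto_integral_birthDeathTail {n : ℝ → ℝ} (hn : Assumption1 n) {β y : ℝ}
    (hβ0 : 0 ≤ β) (hβ1 : β < 1) (hy : 0 < y) :
    Tendsto (fun t => ∫ τ in (0 : ℝ)..t, n (t - τ) * birthDeathTail β τ ⌊y * exp ((1 - β) * t)⌋₊)
      atTop (𝓝 ((1 - β) * ∫ u in Ioi 0, n u * exp (-((1 - β) * y * exp ((1 - β) * u))))) := by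
  have hlam : 0 < 1 - β := sub_pos.2 hβ1
  set k : ℝ → ℕ := fun t => ⌊y * exp ((1 - β) * t)⌋₊
  set F : ℝ → ℝ → ℝ := fun t => (Ioo 0 t).indicator fun u => n u * birthDeathTail β (t - u) (k t)
  have hF : ∀ᶠ t in atTop,
      ∫ u in Ioi 0, F t u = ∫ τ in (0 : ℝ)..t, n (t - τ) * birthDeathTail β τ (k t) := by
    filter_upwards [eventually_ge_atTop 0] with t ht
    simp only [F, ← intervalIntegral_comp_sub_eq_setIntegral_indicator _ ht, sub_sub_cancel]
  have hmeas : ∀ t, AEStronglyMeasurable (F t) (volume.restrict (Ioi 0)) := fun t =>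
    ((hn.continuousOn.aestronglyMeasurable measurableSet_Ioi).mul
      (by unfold birthDeathTail birthDeathS; fun_prop)).indicator measurableSet_Ioo
  have hbound : ∀ t, ∀ᵐ u ∂volume.restrict (Ioi 0),
      ‖F t u‖ ≤ exp (1 - β) * (n u * exp (-((1 - β) * y * exp ((1 - β) * u)))) := by
    refine fun t => ae_restrict_of_forall_mem measurableSet_Ioi fun u (hu : 0 < u) => ?_
    have hnu := (hn.pos hu).le
    by_cases hut : u ∈ Ioo 0 t
    · simp only [F, indicator_of_mem hut]
      rw [norm_of_nonneg (mul_nonneg hnu (birthDeathTail_nonneg hβ1 (sub_pos.2 hut.2) _)),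
        mul_left_comm]
      exact mul_le_mul_of_nonneg_left (birthDeathTail_floor_le hβ0 hβ1 hut.2) hnu
    · simp only [F, indicator_of_notMem hut, norm_zero]
      positivity
  have hlim : ∀ᵐ u ∂volume.restrict (Ioi 0), Tendsto (fun t => F t u) atTop
      (𝓝 ((1 - β) * (n u * exp (-((1 - β) * y * exp ((1 - β) * u)))))) := by
    refine ae_restrict_of_forall_mem measurableSet_Ioi fun u (hu : 0 < u) => ?_
    have := (tendsto_birthDeathTail_floor hβ0 hβ1 hy.le u).const_mul (n u)
    rw [mul_left_comm] at this
    refine this.congr' ?_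
    filter_upwards [eventually_gt_atTop u] with t hut
    simp only [F, k, indicator_of_mem (show u ∈ Ioo 0 t from ⟨hu, hut⟩)]
  rw [← MeasureTheory.integral_const_mul]
  exact (tendsto_integral_filter_of_dominated_convergence _ (.of_forall hmeas)
    (.of_forall hbound) ((hn.integrableOn_mul_exp_neg_exp (mul_pos hlam hy) hlam).const_mul _)
    hlim).congr' hF

/-- Poisson process characterisation of the tail: the rescaled clone size `Y_t e^{−λt}`,
conditioned to exceed `ε`, converges in distribution to the law with tail `m(x)/m(ε)`,
the normalised mean measure of the limiting Poisson point process of clone sizes. Here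
`N_t(y) = ∫_0^t n(t−τ)(1−β S_τ⁻¹) S_τ^{−⌊y e^{λt}⌋} dτ` so
`P(Y_t > ⌊y e^{λt}⌋) = N_t(y)/a_t`, and
`m(y) = ∫_y^∞ n(λ⁻¹ log(s/y)) e^{−λs} s⁻¹ ds`. -/
theorem rescaled_clone_size_conditional_limit
    (β : ℝ) (hβ : β ∈ Set.Ico (0 : ℝ) 1) (lam : ℝ) (hlam : lam = 1 - β)
    (n : ℝ → ℝ) (hn : Assumption1 n)
    (ε x : ℝ) (hε : 0 < ε) (hεx : ε ≤ x)
    (N : ℝ → ℝ → ℝ) (m : ℝ → ℝ)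
    (hN : ∀ t y : ℝ, N t y =
      ∫ τ in (0:ℝ)..t,
        n (t - τ) * (1 - β * (birthDeathS β τ)⁻¹) *
          ((birthDeathS β τ)⁻¹) ^ (⌊y * Real.exp (lam * t)⌋₊))
    (hm : ∀ y : ℝ, m y =
      ∫ s in Set.Ioi y, n (lam⁻¹ * Real.log (s / y)) * Real.exp (-lam * s) / s) :
    Filter.Tendsto (fun t : ℝ => N t x / N t ε) Filter.atTop (nhds (m x / m ε)) := by
  obtain ⟨hβ0, hβ1⟩ := hβ
  subst hlam
  have hlam : 0 < 1 - β := sub_pos.2 hβ1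
  have hm' : ∀ y, 0 < y →
      m y = (1 - β) * ∫ u in Ioi 0, n u * exp (-((1 - β) * y * exp ((1 - β) * u))) :=
    fun y hy => (hm y).trans (integral_Ioi_comp_log_div n hlam hy)
  have hlim : ∀ y, 0 < y → Tendsto (fun t => N t y) atTop (𝓝 (m y)) := fun y hy => by
    rw [hm' y hy]
    refine (hn.tendsto_integral_birthDeathTail hβ0 hβ1 hy).congr fun t => ?_
    simp only [hN, birthDeathTail, mul_assoc]
  refine (hlim x (hε.trans_le hεx)).div (hlim ε hε) ?_
  rw [hm' ε hε]
  exact (mul_pos hlam (hn.integral_mul_exp_neg_exp_pos (mul_pos hlam hε) hlam)).ne'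
end

section
/- Let β ∈ [0,1), λ = 1−β, and let m ≥ 1 be an integer. Define μ_m(t) = (1−β S_t^{−1})(S_t−1)·Σ_{j=1}^∞ j^m S_t^{−j}, the m-th moment of the birth–death process started from one individual. Then μ_m(t) − m!·λ^{1−m}·e^{mλt} = O(e^{(m−1)λt}) as t → ∞. -/
open Filter Real Asymptotics

/-- The `m`-th moment of the birth–death process started from one individual:
`E(Z_u^m) = (1 − β S_u⁻¹)(S_u − 1) Σ_{j≥1} j^m S_u^{−j}`. -/
noncomputable def birthDeathMoment (β : ℝ) (m : ℕ) (u : ℝ) : ℝ :=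
  (1 - β * (birthDeathS β u)⁻¹) * (birthDeathS β u - 1) *
    ∑' j : ℕ, (j : ℝ) ^ m * ((birthDeathS β u)⁻¹) ^ j

/-!
Expanding `j ^ m` in falling factorials, `j ^ m = ∑ₖ S(m, k) j(j-1)⋯(j-k+1)` with Stirling numbers
of the second kind, sums the series in closed form:
`∑ⱼ j ^ m q ^ j = ∑ₖ S(m, k) k! q ^ k / (1 - q) ^ (k + 1)`.
With `q = S_u⁻¹` and `x = e^{-λu}` this gives `E(Z_u^m) = e^{mλu} P(x)` for a rational function `P`
that is regular at `x = 0` with `P(0) = m! λ^{1-m}`. Since `P` is differentiable at `0`,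
`E(Z_u^m) - m! λ^{1-m} e^{mλu} = e^{mλu} (P(x) - P(0)) = O(e^{mλu} x) = O(e^{(m-1)λu})`.
-/

open Finset Nat Topology

namespace Nat

theorem mul_descFactorial (n k : ℕ) :
    n * n.descFactorial k = n.descFactorial (k + 1) + k * n.descFactorial k := by
  rw [descFactorial_succ]
  rcases le_or_gt k n with h | h
  · rw [← add_mul, Nat.sub_add_cancel h]
  · simp [descFactorial_eq_zero_iff_lt.2 h]

theorem pow_eq_sum_stirlingSecond_mul_descFactorial (n m : ℕ) :
    n ^ m = ∑ k ∈ range (m + 1), stirlingSecond m k * n.descFactorial k := by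
  induction m with
  | zero => simp
  | succ m ih =>
    have hshift : ∑ k ∈ range (m + 1), (k + 1) * stirlingSecond m (k + 1) * n.descFactorial (k + 1)
        = ∑ k ∈ range (m + 1), k * stirlingSecond m k * n.descFactorial k := by
      have h := sum_range_succ' (fun k => k * stirlingSecond m k * n.descFactorial k) (m + 1)
      rw [sum_range_succ, stirlingSecond_eq_zero_of_lt (lt_succ_self m)] at h
      simpa using h.symm
    calc n ^ (m + 1) = ∑ k ∈ range (m + 1), stirlingSecond m k * (n * n.descFactorial k) := by
          rw [pow_succ, ih, sum_mul]
          exact sum_congr rfl fun k _ => by ring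
      _ = ∑ k ∈ range (m + 1), stirlingSecond m k * n.descFactorial (k + 1) +
            ∑ k ∈ range (m + 1), (k + 1) * stirlingSecond m (k + 1) * n.descFactorial (k + 1) := by
          rw [hshift, ← sum_add_distrib]
          exact sum_congr rfl fun k _ => by rw [mul_descFactorial]; ring
      _ = ∑ k ∈ range (m + 2), stirlingSecond (m + 1) k * n.descFactorial k := by
          rw [sum_range_succ' _ (m + 1), stirlingSecond_succ_zero, zero_mul, add_zero,
            ← sum_add_distrib]
          exact sum_congr rfl fun k _ => by rw [stirlingSecond_succ_succ]; ring

end Nat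

section Geometric

variable {𝕜 : Type*} [NormedField 𝕜] {r : 𝕜}

theorem hasSum_descFactorial_mul_geometric_of_norm_lt_one (hr : ‖r‖ < 1) (k : ℕ) :
    HasSum (fun n : ℕ => (n.descFactorial k : 𝕜) * r ^ n) (k ! * r ^ k / (1 - r) ^ (k + 1)) := by
  rw [← hasSum_nat_add_iff' k]
  have hlow : ∑ i ∈ range k, ((i.descFactorial k : ℕ) : 𝕜) * r ^ i = 0 :=
    sum_eq_zero fun i hi => by simp [descFactorial_eq_zero_iff_lt.2 (mem_range.1 hi)]
  have hshift : (fun n => ((n + k).descFactorial k : 𝕜) * r ^ (n + k)) =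
      fun n => (k ! * r ^ k) * ((n + k).choose k * r ^ n) := by
    funext n
    rw [descFactorial_eq_factorial_mul_choose, pow_add]
    push_cast
    ring
  rw [hlow, sub_zero, hshift, ← mul_one_div]
  exact (hasSum_choose_mul_geometric_of_norm_lt_one k hr).mul_left _

theorem hasSum_pow_mul_geometric_of_norm_lt_one (hr : ‖r‖ < 1) (m : ℕ) :
    HasSum (fun n : ℕ => (n : 𝕜) ^ m * r ^ n)
      (∑ k ∈ range (m + 1), stirlingSecond m k * (k ! * r ^ k / (1 - r) ^ (k + 1))) := by
  have hexpand : (fun n : ℕ => (n : 𝕜) ^ m * r ^ n) =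
      fun n => ∑ k ∈ range (m + 1), (stirlingSecond m k : 𝕜) * (n.descFactorial k * r ^ n) := by
    funext n
    rw [← Nat.cast_pow, pow_eq_sum_stirlingSecond_mul_descFactorial, Nat.cast_sum, sum_mul]
    push_cast
    simp only [mul_assoc]
  rw [hexpand]
  exact hasSum_sum fun k _ => (hasSum_descFactorial_mul_geometric_of_norm_lt_one hr k).mul_left _

end Geometric

/-- `e^{-mλu} E(Z_u^m)` as a function of `x = e^{-λu}`; unlike the moment it is regular at `x = 0`,
i.e. as `u → ∞`. -/
noncomputable def rescaledBirthDeathMoment (lam : ℝ) (m : ℕ) (x : ℝ) : ℝ :=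
  ∑ k ∈ range (m + 1),
    stirlingSecond m k * k ! * (lam / (1 - x)) * ((1 - x) / lam) ^ k * x ^ (m - k)

theorem rescaledBirthDeathMoment_zero {lam : ℝ} (hlam : lam ≠ 0) (m : ℕ) :
    rescaledBirthDeathMoment lam m 0 = m ! * lam ^ ((1 : ℤ) - m) := by
  rw [rescaledBirthDeathMoment, sum_range_succ, sum_eq_zero fun k hk => ?_]
  · simp [stirlingSecond_self, zpow_sub₀ hlam]
    field_simp
  · simp [Nat.sub_ne_zero_of_lt (mem_range.1 hk)]

theorem differentiableAt_rescaledBirthDeathMoment (lam : ℝ) (m : ℕ) :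
    DifferentiableAt ℝ (rescaledBirthDeathMoment lam m) 0 := by
  unfold rescaledBirthDeathMoment
  fun_prop (disch := norm_num)

theorem birthDeathMoment_eq_exp_mul_rescaled {β u : ℝ} (hβ : β < 1) (hu : 0 < u) (m : ℕ) :
    birthDeathMoment β m u =
      exp (m * (1 - β) * u) * rescaledBirthDeathMoment (1 - β) m (exp (-(1 - β) * u)) := by
  rw [birthDeathMoment, birthDeathS, rescaledBirthDeathMoment]
  set x := exp (-(1 - β) * u) with hx
  have hx0 : 0 < x := exp_pos _
  have hx1 : x < 1 := exp_lt_one_iff.2 (by nlinarith)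
  have hlx : 0 < (1 - β) * x := mul_pos (sub_pos.2 hβ) hx0
  have hq : ‖(1 - x) / (1 - β * x)‖ < 1 := by
    rw [norm_div, Real.norm_of_nonneg (by linarith), Real.norm_of_nonneg (by linarith),
      div_lt_one (by linarith)]
    linarith
  have hexp : exp (m * (1 - β) * u) = (x ^ m)⁻¹ := by
    rw [hx, ← exp_nat_mul, ← exp_neg]; ring_nf
  have h1 : (1 : ℝ) - x ≠ 0 := by linarith
  have h2 : (1 : ℝ) - β * x ≠ 0 := by linarith
  have h3 : (1 : ℝ) - β ≠ 0 := by linarith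
  have h4 : x ≠ 0 := hx0.ne'
  have hS : (1 - β * x) / (1 - x) - 1 = (1 - β) * x / (1 - x) := by
    rw [div_sub_one h1]; ring
  have hβq : 1 - β * ((1 - x) / (1 - β * x)) = (1 - β) / (1 - β * x) := by
    rw [mul_div_assoc', one_sub_div h2]; ring
  have hq1 : 1 - (1 - x) / (1 - β * x) = (1 - β) * x / (1 - β * x) := by
    rw [one_sub_div h2]; ring
  rw [inv_div, (hasSum_pow_mul_geometric_of_norm_lt_one hq m).tsum_eq, mul_sum, mul_sum, hexp, hS,
    hβq, hq1]
  refine sum_congr rfl fun k hk => ?_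
  rw [← pow_sub_mul_pow x (Nat.le_of_lt_succ (mem_range.1 hk))]
  simp only [div_pow, mul_pow, pow_succ, mul_inv]
  field_simp

theorem birth_death_moment_asymptotics_general
    (β : ℝ) (hβ : β ∈ Set.Ico (0 : ℝ) 1) (lam : ℝ) (hlam : lam = 1 - β)
    (m : ℕ) :
    (fun t : ℝ =>
        birthDeathMoment β m t -
          (Nat.factorial m : ℝ) * lam ^ ((1 : ℤ) - (m : ℤ)) * Real.exp ((m : ℝ) * lam * t))
      =O[Filter.atTop] (fun t : ℝ => Real.exp (((m : ℝ) - 1) * lam * t)) := by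
  subst hlam
  have hpos : 0 < 1 - β := sub_pos.2 hβ.2
  have hx : Tendsto (fun t => exp (-(1 - β) * t)) atTop (𝓝 0) :=
    (tendsto_exp_neg_atTop_nhds_zero.comp (tendsto_id.const_mul_atTop hpos)).congr fun t =>
      congrArg exp (neg_mul _ t).symm
  have hP : (fun t => rescaledBirthDeathMoment (1 - β) m (exp (-(1 - β) * t)) -
      rescaledBirthDeathMoment (1 - β) m 0) =O[atTop] fun t => exp (-(1 - β) * t) :=
    ((differentiableAt_rescaledBirthDeathMoment (1 - β) m).isBigO_sub.comp_tendsto hx).congr_right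
      fun t => sub_zero _
  rw [← rescaledBirthDeathMoment_zero hpos.ne']
  refine EventuallyEq.trans_isBigO ?_ (((isBigO_refl (fun t => exp (m * (1 - β) * t)) _).mul
    hP).congr_right fun t => ?_)
  · filter_upwards [eventually_gt_atTop 0] with t ht
    rw [birthDeathMoment_eq_exp_mul_rescaled hβ.2 ht]
    ring
  · rw [← exp_add]
    ring_nf

/-- Asymptotics of the moments of the birth–death process:
`μ_m(t) − m! λ^{1−m} e^{mλt} = O(e^{(m−1)λt})` as `t → ∞`, where `λ = 1−β`. -/
theorem birth_death_moment_asymptotics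
    (β : ℝ) (hβ : β ∈ Set.Ico (0 : ℝ) 1) (lam : ℝ) (hlam : lam = 1 - β)
    (m : ℕ) (hm : 1 ≤ m) :
    (fun t : ℝ =>
        birthDeathMoment β m t -
          (Nat.factorial m : ℝ) * lam ^ ((1 : ℤ) - (m : ℤ)) * Real.exp ((m : ℝ) * lam * t))
      =O[Filter.atTop] (fun t : ℝ => Real.exp (((m : ℝ) - 1) * lam * t)) :=
  birth_death_moment_asymptotics_general β hβ lam hlam m
end
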